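/- In Non-Disconnecting Arc-Kayles on the cycle C_n (n ≥ 3), the first move transforms the game into the game on the path P_{n-2}, and the first player wins if and only if ⌊n/2⌋ is odd. -/

import Mathlib

open SimpleGraph Finset

variable {V : Type*} [Fintype V] [DecidableEq V]

/-- A legal move in Non-Disconnecting Arc-Kayles on position `s`. -/
def NDLegal (G : SimpleGraph V) (s : Finset V) (u v : V) : Prop :=
  u ∈ s ∧ v ∈ s ∧ G.Adj u v ∧
    (s \ {u, v} = ∅ ∨ (G.induce ((s \ {u, v} : Finset V) : Set V)).Connected)

/-- Fuel-indexed winning predicate (normal play). -/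
def NDWinAux (G : SimpleGraph V) : ℕ → Finset V → Prop
  | 0, _ => False
  | n + 1, s => ∃ u v, NDLegal G s u v ∧ ¬ NDWinAux G n (s \ {u, v})

/-- The player to move wins Non-Disconnecting Arc-Kayles from position `s`. -/
def NDFirstWins (G : SimpleGraph V) (s : Finset V) : Prop :=
  NDWinAux G s.card s

/-!
The outcome of Non-Disconnecting Arc-Kayles only depends on the isomorphism type of the graph
induced on the position. Deleting an edge of `C_{k+2}` always leaves `P_k`. On `P_{k+2}` a legal
move must delete an end edge, since deleting an inner edge separates the two ends of the path, and
this again leaves `P_k`; deleting the first edge is always legal. Hence `C_{k+2}` and `P_{k+2}` are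
won exactly when `P_k` is lost, and `P_0`, `P_1`, `C_0`, `C_1` are lost, having no edges.
-/

/-- `g` restricts to an isomorphism `H.induce t ≃g G.induce s`; phrased through `g` itself so that
it survives deleting vertices without subtype bookkeeping. -/
structure IsInducedIso {α β : Type*} (H : SimpleGraph α) (G : SimpleGraph β) (t : Set α)
    (s : Set β) (g : α → β) : Prop where
  bijOn : Set.BijOn g t s
  adj_iff : ∀ ⦃a⦄, a ∈ t → ∀ ⦃b⦄, b ∈ t → (G.Adj (g a) (g b) ↔ H.Adj a b)

namespace IsInducedIso

variable {α β γ : Type*} {H : SimpleGraph α} {G : SimpleGraph β} {t : Set α} {s : Set β}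
  {g : α → β}

theorem sdiff_pair (h : IsInducedIso H G t s g) {u v : α} (hu : u ∈ t) (hv : v ∈ t) :
    IsInducedIso H G (t \ {u, v}) (s \ {g u, g v}) g where
  bijOn := by
    have hsub : ({u, v} : Set α) ⊆ t := Set.pair_subset hu hv
    convert h.bijOn.subset_left (Set.sdiff_subset (t := {u, v})) using 1
    rw [h.bijOn.injOn.image_sdiff_subset hsub, h.bijOn.image_eq, Set.image_pair]
  adj_iff _ ha _ hb := h.adj_iff ha.1 hb.1

theorem nonempty_iso (h : IsInducedIso H G t s g) : Nonempty (H.induce t ≃g G.induce s) :=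
  ⟨{ toEquiv := h.bijOn.equiv g
     map_rel_iff' := fun {a b} => h.adj_iff a.2 b.2 }⟩

theorem comp_iso {G' : SimpleGraph γ} (h : IsInducedIso H G t s g) (φ : G ≃g G') :
    IsInducedIso H G' t (φ '' s) (φ ∘ g) where
  bijOn := (φ.toEquiv.bijOn_image).comp h.bijOn
  adj_iff _ ha _ hb := φ.map_adj_iff.trans (h.adj_iff ha hb)

end IsInducedIso

section Game

variable {α β : Type*} [DecidableEq α] [DecidableEq β] {G : SimpleGraph α} {s : Finset α}
  {u v : α}

theorem NDLegal.symm (h : NDLegal G s u v) : NDLegal G s v u := by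
  rwa [NDLegal, Finset.pair_comm, G.adj_comm, ← and_assoc, and_comm (a := v ∈ s), and_assoc]

theorem NDLegal.card_sdiff_add_two (h : NDLegal G s u v) : (s \ {u, v}).card + 2 = s.card := by
  have hsub : {u, v} ⊆ s := Finset.insert_subset h.1 (Finset.singleton_subset_iff.2 h.2.1)
  have hcard := Finset.card_le_card hsub
  rw [Finset.card_sdiff_of_subset hsub, Finset.card_pair h.2.2.1.ne] at *
  omega

theorem NDWinAux_succ_iff_of_card_le {m : ℕ} (hs : s.card ≤ m) :
    NDWinAux G (m + 1) s ↔ NDWinAux G m s := by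
  induction m generalizing s with
  | zero =>
    obtain rfl := Finset.card_eq_zero.mp (Nat.le_zero.mp hs)
    simp [NDWinAux, NDLegal]
  | succ m ih =>
    refine exists_congr fun u => exists_congr fun v => and_congr_right fun h => not_congr ?_
    exact ih (by have := h.card_sdiff_add_two; omega)

theorem NDWinAux_iff_NDFirstWins {m : ℕ} (hs : s.card ≤ m) :
    NDWinAux G m s ↔ NDFirstWins G s := by
  induction m, hs using Nat.le_induction with
  | base => rfl
  | succ m hm ih => exact (NDWinAux_succ_iff_of_card_le hm).trans ih

theorem NDFirstWins_iff :
    NDFirstWins G s ↔ ∃ u v, NDLegal G s u v ∧ ¬NDFirstWins G (s \ {u, v}) := by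
  rw [← NDWinAux_iff_NDFirstWins (Nat.le_succ s.card), NDWinAux]
  refine exists_congr fun u => exists_congr fun v => and_congr_right fun h => not_congr ?_
  exact NDWinAux_iff_NDFirstWins (by have := h.card_sdiff_add_two; omega)

theorem not_NDFirstWins_of_subsingleton [Subsingleton α] : ¬NDFirstWins G s := by
  rw [NDFirstWins_iff]
  rintro ⟨u, v, h, -⟩
  exact h.2.2.1.ne (Subsingleton.elim u v)

theorem NDFirstWins_iff_not_of_forall (P : Prop) (hmove : ∃ u v, NDLegal G s u v)
    (hnext : ∀ u v, NDLegal G s u v → (NDFirstWins G (s \ {u, v}) ↔ P)) :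
    NDFirstWins G s ↔ ¬P := by
  rw [NDFirstWins_iff]
  obtain ⟨u₀, v₀, h₀⟩ := hmove
  exact ⟨fun ⟨u, v, h, hlose⟩ => (hnext u v h).not.mp hlose,
    fun hP => ⟨u₀, v₀, h₀, (hnext u₀ v₀ h₀).not.mpr hP⟩⟩

variable {H : SimpleGraph β} {t : Finset β} {g : β → α}

theorem IsInducedIso.finset_sdiff_pair (h : IsInducedIso H G t s g) {u v : β} (hu : u ∈ t)
    (hv : v ∈ t) : IsInducedIso H G ↑(t \ {u, v}) ↑(s \ {g u, g v}) g := by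
  push_cast
  exact h.sdiff_pair hu hv

theorem IsInducedIso.NDLegal_iff (h : IsInducedIso H G t s g) {u v : β} (hu : u ∈ t)
    (hv : v ∈ t) : NDLegal G s (g u) (g v) ↔ NDLegal H t u v := by
  have hrest := h.finset_sdiff_pair hu hv
  have hempty : s \ {g u, g v} = ∅ ↔ t \ {u, v} = ∅ := by
    rw [← Finset.coe_eq_empty, ← hrest.bijOn.image_eq, Set.image_eq_empty, Finset.coe_eq_empty]
  obtain ⟨e⟩ := hrest.nonempty_iso
  simp only [NDLegal, Finset.mem_coe.mp (h.bijOn.mapsTo hu), Finset.mem_coe.mp (h.bijOn.mapsTo hv),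
    hu, hv, h.adj_iff hu hv, hempty, e.connected_iff]

theorem IsInducedIso.NDWinAux_iff (h : IsInducedIso H G t s g) (m : ℕ) :
    NDWinAux G m s ↔ NDWinAux H m t := by
  induction m generalizing s t with
  | zero => rfl
  | succ m ih =>
    have step : ∀ u ∈ t, ∀ v ∈ t,
        (NDLegal G s (g u) (g v) ∧ ¬NDWinAux G m (s \ {g u, g v})) ↔
          (NDLegal H t u v ∧ ¬NDWinAux H m (t \ {u, v})) := fun u hu v hv =>
      and_congr (h.NDLegal_iff hu hv) (not_congr (ih (h.finset_sdiff_pair hu hv)))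
    constructor
    · rintro ⟨u', v', hleg, hlose⟩
      obtain ⟨u, hu, rfl⟩ := h.bijOn.surjOn hleg.1
      obtain ⟨v, hv, rfl⟩ := h.bijOn.surjOn hleg.2.1
      exact ⟨u, v, (step u hu v hv).mp ⟨hleg, hlose⟩⟩
    · rintro ⟨u, v, hmove⟩
      exact ⟨g u, g v, (step u hmove.1.1 v hmove.1.2.1).mpr hmove⟩

theorem IsInducedIso.NDFirstWins_iff (h : IsInducedIso H G t s g) :
    NDFirstWins G s ↔ NDFirstWins H t := by
  have hcard : t.card = s.card :=
    Finset.card_nbij g h.bijOn.mapsTo h.bijOn.injOn h.bijOn.surjOn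
  rw [NDFirstWins, NDFirstWins, ← hcard]
  exact h.NDWinAux_iff _

end Game

section Paths

theorem cycleGraph_adj_iff_pathGraph_adj {n : ℕ} {x y : Fin n} (hx : 1 ≤ x.val)
    (hy : 1 ≤ y.val) : (cycleGraph n).Adj x y ↔ (pathGraph n).Adj x y := by
  refine ⟨fun h => ?_, fun h => pathGraph_le_cycleGraph h⟩
  have key : ∀ a b : Fin n, 1 ≤ a.val → (a - b).val = 1 → b.val + 1 = a.val := by
    intro a b ha hab
    rcases le_or_gt b a with hba | hab'
    · rw [Fin.coe_sub_iff_le.mpr hba] at hab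
      omega
    · rw [Fin.coe_sub_iff_lt.mpr hab'] at hab
      omega
  rw [pathGraph_adj]
  rcases cycleGraph_adj'.mp h with h | h
  · exact Or.inr (key x y hx h)
  · exact Or.inl (key y x hy h)

theorem isInducedIso_addNat_two {k : ℕ} {G : SimpleGraph (Fin (k + 2))}
    (hG : ∀ x y : Fin (k + 2), 1 ≤ x.val → 1 ≤ y.val →
      (G.Adj x y ↔ (pathGraph (k + 2)).Adj x y)) :
    IsInducedIso (pathGraph k) G Set.univ {0, 1}ᶜ (Fin.addNat · 2) where
  bijOn := by
    refine ⟨fun b _ => ?_, fun a _ b _ hab => (Fin.addNat_inj 2).mp hab, fun x hx => ?_⟩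
    · simp [Fin.ext_iff]
    · simp only [Set.mem_compl_iff, Set.mem_insert_iff, Set.mem_singleton_iff, Fin.ext_iff,
        Fin.val_zero, Fin.val_one] at hx
      exact ⟨⟨x.val - 2, by omega⟩, trivial, Fin.ext (by simp; omega)⟩
  adj_iff a _ b _ := by
    rw [hG _ _ (by simp) (by simp), pathGraph_adj, pathGraph_adj]
    simp

def cycleGraphAddLeft (k : ℕ) (c : Fin (k + 2)) : cycleGraph (k + 2) ≃g cycleGraph (k + 2) where
  toEquiv := Equiv.addLeft c
  map_rel_iff' := by simp [cycleGraph_adj]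

def pathGraphRev (n : ℕ) : pathGraph n ≃g pathGraph n where
  toEquiv := Fin.revPerm
  map_rel_iff' := by
    intro a b
    simp only [Fin.revPerm_apply, pathGraph_adj, Fin.val_rev]
    omega

@[simp]
theorem pathGraphRev_apply {n : ℕ} (x : Fin n) : pathGraphRev n x = x.rev := rfl

theorem NDLegal.pathGraph_eq_zero_or_eq_last {m : ℕ} {u v : Fin m}
    (h : NDLegal (pathGraph m) univ u v) (huv : u.val + 1 = v.val) :
    u.val = 0 ∨ v.val + 1 = m := by
  by_contra! hmid
  have h0 : (⟨0, by omega⟩ : Fin m) ∈ (univ \ {u, v} : Finset (Fin m)) := by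
    simp [Fin.ext_iff]
    omega
  have hlast : (⟨m - 1, by omega⟩ : Fin m) ∈ (univ \ {u, v} : Finset (Fin m)) := by
    simp [Fin.ext_iff]
    omega
  have hconn := h.2.2.2.resolve_left (Finset.nonempty_iff_ne_empty.mp ⟨_, h0⟩)
  obtain ⟨p⟩ := hconn.preconnected ⟨_, h0⟩ ⟨_, hlast⟩
  -- a walk from `0` to `m - 1` avoiding `u` has to cross from below `u` to above it
  obtain ⟨d, -, hlow, hhigh⟩ := p.exists_boundary_dart {x | x.1.val < u.val}
    (show 0 < u.val by omega) (show ¬ m - 1 < u.val by omega)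
  have hd : (pathGraph m).Adj d.fst.1 d.snd.1 := d.adj
  have hne : d.snd.1 ≠ u := fun he => by simpa [he] using d.snd.2
  change d.fst.1.val < u.val at hlow
  change ¬ d.snd.1.val < u.val at hhigh
  rw [pathGraph_adj] at hd
  exact hne (Fin.ext (by omega))

theorem exists_isInducedIso_of_NDLegal_pathGraph {k : ℕ} {u v : Fin (k + 2)}
    (h : NDLegal (pathGraph (k + 2)) univ u v) :
    ∃ g, IsInducedIso (pathGraph k) (pathGraph (k + 2)) Set.univ {u, v}ᶜ g := by
  wlog huv : u.val + 1 = v.val generalizing u v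
  · rw [Set.pair_comm]
    exact this h.symm ((pathGraph_adj.mp h.2.2.1).resolve_left huv)
  have base := isInducedIso_addNat_two (G := pathGraph (k + 2)) fun _ _ _ _ => Iff.rfl
  rcases h.pathGraph_eq_zero_or_eq_last huv with hu | hv
  · obtain rfl : u = 0 := Fin.ext hu
    obtain rfl : v = 1 := Fin.ext (by simp; omega)
    exact ⟨_, base⟩
  · refine ⟨pathGraphRev (k + 2) ∘ (Fin.addNat · 2), ?_⟩
    convert base.comp_iso (pathGraphRev (k + 2)) using 1
    have hrev0 : pathGraphRev (k + 2) 0 = v := Fin.ext (by simp; omega)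
    have hrev1 : pathGraphRev (k + 2) 1 = u := Fin.ext (by simp; omega)
    rw [Set.image_compl_eq (pathGraphRev (k + 2)).bijective, Set.image_pair, hrev0, hrev1,
      Set.pair_comm]

theorem exists_isInducedIso_of_adj_cycleGraph {k : ℕ} {u v : Fin (k + 2)}
    (h : (cycleGraph (k + 2)).Adj u v) :
    ∃ g, IsInducedIso (pathGraph k) (cycleGraph (k + 2)) Set.univ {u, v}ᶜ g := by
  wlog huv : v = u + 1 generalizing u v
  · rw [Set.pair_comm]
    exact this h.symm
      (eq_add_of_sub_eq' ((cycleGraph_adj.mp h).resolve_right (mt eq_add_of_sub_eq' huv)))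
  subst huv
  have base := isInducedIso_addNat_two (k := k) fun _ _ => cycleGraph_adj_iff_pathGraph_adj
  refine ⟨cycleGraphAddLeft k u ∘ (Fin.addNat · 2), ?_⟩
  convert base.comp_iso (cycleGraphAddLeft k u) using 1
  rw [Set.image_compl_eq (cycleGraphAddLeft k u).bijective, Set.image_pair]
  simp [cycleGraphAddLeft]

end Paths

section Outcomes

variable {α : Type*} [Fintype α] [DecidableEq α] {G : SimpleGraph α}

theorem coe_univ_sdiff_pair (u v : α) : ((univ \ {u, v} : Finset α) : Set α) = {u, v}ᶜ := by
  simp [Set.compl_eq_univ_sdiff]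

theorem NDLegal_of_isInducedIso_pathGraph {k : ℕ} {u v : α} (hadj : G.Adj u v) {g : Fin k → α}
    (h : IsInducedIso (pathGraph k) G Set.univ {u, v}ᶜ g) : NDLegal G univ u v := by
  refine ⟨mem_univ u, mem_univ v, hadj, ?_⟩
  rw [← Finset.coe_eq_empty, coe_univ_sdiff_pair]
  cases k with
  | zero =>
    left
    rw [← h.bijOn.image_eq, Set.univ_eq_empty_iff.mpr inferInstance, Set.image_empty]
  | succ k =>
    obtain ⟨e⟩ := h.nonempty_iso
    right
    exact e.connected_iff.mp ((induceUnivIso _).connected_iff.mpr (pathGraph_connected k))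

theorem NDFirstWins_univ_iff_not_pathGraph {k : ℕ} (hmove : ∃ u v, NDLegal G univ u v)
    (hrest : ∀ u v, NDLegal G univ u v →
      ∃ g, IsInducedIso (pathGraph k) G Set.univ {u, v}ᶜ g) :
    NDFirstWins G univ ↔ ¬NDFirstWins (pathGraph k) univ :=
  NDFirstWins_iff_not_of_forall _ hmove fun u v h => by
    obtain ⟨g, hg⟩ := hrest u v h
    rw [← coe_univ_sdiff_pair, ← Finset.coe_univ] at hg
    exact hg.NDFirstWins_iff

end Outcomes

theorem NDFirstWins_pathGraph (m : ℕ) : NDFirstWins (pathGraph m) univ ↔ Odd (m / 2) := by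
  induction m using Nat.twoStepInduction with
  | zero => exact iff_of_false not_NDFirstWins_of_subsingleton (by decide)
  | one => exact iff_of_false not_NDFirstWins_of_subsingleton (by decide)
  | more k ih _ =>
    have h01 : (pathGraph (k + 2)).Adj 0 1 := by simp [pathGraph_adj]
    have base := isInducedIso_addNat_two (G := pathGraph (k + 2)) fun _ _ _ _ => Iff.rfl
    rw [NDFirstWins_univ_iff_not_pathGraph ⟨0, 1, NDLegal_of_isInducedIso_pathGraph h01 base⟩
      fun _ _ => exists_isInducedIso_of_NDLegal_pathGraph, ih, Nat.add_div_right _ two_pos,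
      Nat.odd_add_one]

theorem NDFirstWins_cycleGraph (n : ℕ) : NDFirstWins (cycleGraph n) univ ↔ Odd (n / 2) := by
  match n with
  | 0 | 1 => exact iff_of_false not_NDFirstWins_of_subsingleton (by decide)
  | k + 2 =>
    have h01 : (cycleGraph (k + 2)).Adj 0 1 := by simp [cycleGraph_adj]
    obtain ⟨g, hg⟩ := exists_isInducedIso_of_adj_cycleGraph h01
    rw [NDFirstWins_univ_iff_not_pathGraph ⟨0, 1, NDLegal_of_isInducedIso_pathGraph h01 hg⟩
      fun _ _ h => exists_isInducedIso_of_adj_cycleGraph h.2.2.1, NDFirstWins_pathGraph,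
      Nat.add_div_right _ two_pos, Nat.odd_add_one]

theorem nonempty_induce_sdiff_pair_iso_pathGraph {n : ℕ} {u v : Fin n}
    (h : (cycleGraph n).Adj u v) :
    Nonempty ((cycleGraph n).induce ((univ \ {u, v} : Finset (Fin n)) : Set (Fin n)) ≃g
      pathGraph (n - 2)) := by
  match n with
  | 0 | 1 => exact (h.ne (Subsingleton.elim u v)).elim
  | k + 2 =>
    obtain ⟨g, hg⟩ := exists_isInducedIso_of_adj_cycleGraph h
    obtain ⟨e⟩ := hg.nonempty_iso
    rw [coe_univ_sdiff_pair]
    exact ⟨e.symm.trans (induceUnivIso _)⟩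

theorem stmt_7_general (n : ℕ) :
    (∀ u v : Fin n, NDLegal (cycleGraph n) Finset.univ u v →
      Nonempty ((cycleGraph n).induce
        ((Finset.univ \ {u, v} : Finset (Fin n)) : Set (Fin n)) ≃g pathGraph (n - 2))) ∧
    (NDFirstWins (cycleGraph n) Finset.univ ↔ Odd (n / 2)) :=
  ⟨fun _ _ h => nonempty_induce_sdiff_pair_iso_pathGraph h.2.2.1, NDFirstWins_cycleGraph n⟩

/-- On the cycle `C_n` (`n ≥ 3`), every first move of Non-Disconnecting Arc-Kayles leaves a
graph isomorphic to the path `P_{n-2}`, and the first player wins iff `⌊n/2⌋` is odd. -/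
theorem stmt_7 (n : ℕ) (hn : 3 ≤ n) :
    (∀ u v : Fin n, NDLegal (cycleGraph n) Finset.univ u v →
      Nonempty ((cycleGraph n).induce
        ((Finset.univ \ {u, v} : Finset (Fin n)) : Set (Fin n)) ≃g pathGraph (n - 2))) ∧
    (NDFirstWins (cycleGraph n) Finset.univ ↔ Odd (n / 2)) :=
  stmt_7_general n
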